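/- If n is a positive integer with KL(n) > 0, then h(n) ≥ 27/(2π²). -/

import Mathlib

/-!
A divisor `d` of `n` contributes positively to `KL n` exactly when `2 φ(d) < d`, and `h` grows
along divisibility, so it suffices to show `3/2 ≤ h d` for such `d`; as `π² > 9`, this is more
than `27 / (2π²)`. For even `d` this is `h 2 = 3/2`. For odd `d` the multiplicative inequality
`d⁵ ≤ σ(d)³ φ(d)²` (true on odd prime powers because `p⁵ ≤ (p+1)³ (p-1)²` for `p ≥ 3`) together
with `4 φ(d)² < d²` gives `4 d³ < σ(d)³`, so `(3d)³ = 27 d³ < (2σ(d))³`.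
-/

/-- `KL n = ∑_{d ∣ n} d · log (d / (2 φ(d)))`. -/
noncomputable def KL (n : ℕ) : ℝ :=
  ∑ d ∈ n.divisors, (d : ℝ) * Real.log ((d : ℝ) / (2 * (Nat.totient d : ℝ)))

/-- `h n = σ(n) / n`. -/
noncomputable def h (n : ℕ) : ℝ := ((∑ d ∈ n.divisors, d : ℕ) : ℝ) / (n : ℝ)

open Finset ArithmeticFunction
open scoped ArithmeticFunction.sigma Nat

theorem pow_five_le_succ_pow_three_mul_pred_sq {p : ℕ} (hp : 3 ≤ p) :
    p ^ 5 ≤ (p + 1) ^ 3 * (p - 1) ^ 2 := by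
  obtain ⟨q, rfl⟩ : ∃ q, p = q + 1 := ⟨p - 1, by omega⟩
  have hq : 2 ≤ q := by omega
  simp only [Nat.add_sub_cancel]
  nlinarith [pow_le_pow_left₀ (Nat.zero_le 2) hq 4, pow_le_pow_left₀ (Nat.zero_le 2) hq 3,
    pow_le_pow_left₀ (Nat.zero_le 2) hq 2]

theorem pow_mul_succ_le_sigma_one_prime_pow_succ {p : ℕ} (hp : p.Prime) (k : ℕ) :
    p ^ k * (p + 1) ≤ σ 1 (p ^ (k + 1)) := by
  rw [sigma_one_apply_prime_pow hp, sum_range_succ, sum_range_succ, pow_succ, mul_add_one]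
  omega

theorem prime_pow_pow_five_le_sigma_one_pow_three_mul_totient_sq {p : ℕ} (hp : p.Prime)
    (hodd : Odd p) (k : ℕ) :
    (p ^ (k + 1)) ^ 5 ≤ σ 1 (p ^ (k + 1)) ^ 3 * φ (p ^ (k + 1)) ^ 2 := by
  have hp3 : 3 ≤ p := by obtain ⟨m, rfl⟩ := hodd; have := hp.two_le; omega
  rw [Nat.totient_prime_pow_succ hp]
  calc (p ^ (k + 1)) ^ 5 = (p ^ k) ^ 5 * p ^ 5 := by ring
    _ ≤ (p ^ k) ^ 5 * ((p + 1) ^ 3 * (p - 1) ^ 2) :=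
        Nat.mul_le_mul_left _ (pow_five_le_succ_pow_three_mul_pred_sq hp3)
    _ = (p ^ k * (p + 1)) ^ 3 * (p ^ k * (p - 1)) ^ 2 := by ring
    _ ≤ σ 1 (p ^ (k + 1)) ^ 3 * (p ^ k * (p - 1)) ^ 2 := by
        gcongr; exact pow_mul_succ_le_sigma_one_prime_pow_succ hp k

theorem pow_five_le_sigma_one_pow_three_mul_totient_sq {n : ℕ} (hn : Odd n) :
    n ^ 5 ≤ σ 1 n ^ 3 * φ n ^ 2 := by
  have hn0 : n ≠ 0 := hn.pos.ne'
  have hmul : ∀ a b, a.Coprime b →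
      σ 1 (a * b) ^ 3 * φ (a * b) ^ 2 = σ 1 a ^ 3 * φ a ^ 2 * (σ 1 b ^ 3 * φ b ^ 2) := by
    intro a b hab
    rw [isMultiplicative_sigma.map_mul_of_coprime hab, Nat.totient_mul hab]
    ring
  rw [Nat.multiplicative_factorization (fun m ↦ σ 1 m ^ 3 * φ m ^ 2) hmul (by simp) hn0]
  conv_lhs => rw [← Nat.prod_factorization_pow_eq_self hn0, Finsupp.prod, ← prod_pow]
  refine prod_le_prod' fun p hp ↦ ?_
  have hp' : p.Prime := Nat.prime_of_mem_primeFactors hp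
  obtain ⟨k, hk⟩ : ∃ k, n.factorization p = k + 1 :=
    Nat.exists_eq_add_one.mpr (hp'.factorization_pos_of_dvd hn0 (Nat.dvd_of_mem_primeFactors hp))
  rw [hk]
  exact prime_pow_pow_five_le_sigma_one_pow_three_mul_totient_sq hp'
    (hn.of_dvd_nat (Nat.dvd_of_mem_primeFactors hp)) k

theorem three_mul_lt_two_mul_sigma_one_of_odd {n : ℕ} (hn : Odd n) (hφ : 2 * φ n < n) :
    3 * n < 2 * σ 1 n := by
  have hσ : 0 < σ 1 n := sigma_pos 1 n hn.pos.ne'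
  have hscaled : (4 * n ^ 3) * n ^ 2 < σ 1 n ^ 3 * n ^ 2 :=
    calc (4 * n ^ 3) * n ^ 2 = 4 * n ^ 5 := by ring
      _ ≤ 4 * (σ 1 n ^ 3 * φ n ^ 2) :=
          Nat.mul_le_mul_left 4 (pow_five_le_sigma_one_pow_three_mul_totient_sq hn)
      _ = σ 1 n ^ 3 * (2 * φ n) ^ 2 := by ring
      _ < σ 1 n ^ 3 * n ^ 2 := by gcongr
  have hcube : 4 * n ^ 3 < σ 1 n ^ 3 := lt_of_mul_lt_mul_right hscaled (Nat.zero_le _)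
  refine lt_of_pow_lt_pow_left₀ 3 (Nat.zero_le _) ?_
  calc (3 * n) ^ 3 = 27 * n ^ 3 := by ring
    _ < 8 * σ 1 n ^ 3 := by omega
    _ = (2 * σ 1 n) ^ 3 := by ring

theorem h_eq_sigma_one_div (n : ℕ) : h n = σ 1 n / n := by
  rw [h, sigma_one_apply]

theorem h_eq_sum_inv_divisors (n : ℕ) : h n = ∑ d ∈ n.divisors, (d : ℝ)⁻¹ := by
  rw [h, Nat.cast_sum, sum_div, ← Nat.sum_div_divisors n fun d ↦ (d : ℝ)⁻¹]
  refine sum_congr rfl fun d hd ↦ ?_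
  have hd0 : (d : ℝ) ≠ 0 := Nat.cast_ne_zero.mpr (Nat.pos_of_mem_divisors hd).ne'
  rw [Nat.cast_div (Nat.dvd_of_mem_divisors hd) hd0, inv_div]

theorem h_le_h_of_dvd {d n : ℕ} (hdn : d ∣ n) (hn : n ≠ 0) : h d ≤ h n := by
  rw [h_eq_sum_inv_divisors, h_eq_sum_inv_divisors]
  exact sum_le_sum_of_subset_of_nonneg (Nat.divisors_subset_of_dvd hn hdn)
    fun _ _ _ ↦ inv_nonneg.mpr (Nat.cast_nonneg _)

theorem h_two : h 2 = 3 / 2 := by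
  rw [h_eq_sigma_one_div, sigma_one_apply, Nat.Prime.sum_divisors Nat.prime_two]
  norm_num

theorem three_halves_le_h_of_two_mul_totient_lt {n : ℕ} (hφ : 2 * φ n < n) : 3 / 2 ≤ h n := by
  rcases Nat.even_or_odd n with heven | hodd
  · exact h_two ▸ h_le_h_of_dvd heven.two_dvd (by omega)
  · have key : ((3 * n : ℕ) : ℝ) < (2 * σ 1 n : ℕ) :=
      Nat.cast_lt.mpr (three_mul_lt_two_mul_sigma_one_of_odd hodd hφ)
    push_cast at key
    rw [h_eq_sigma_one_div, le_div_iff₀ (by exact_mod_cast hodd.pos)]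
    linarith

theorem exists_two_mul_totient_lt_of_KL_pos {n : ℕ} (hKL : 0 < KL n) :
    ∃ d ∈ n.divisors, 2 * φ d < d := by
  rw [KL] at hKL
  obtain ⟨d, hd, hterm⟩ := exists_lt_of_sum_lt (sum_const_zero.trans_lt hKL)
  refine ⟨d, hd, ?_⟩
  have hlog : 0 < Real.log ((d : ℝ) / (2 * φ d)) := pos_of_mul_pos_right hterm (Nat.cast_nonneg d)
  have hratio : 1 < (d : ℝ) / (2 * φ d) := (Real.log_pos_iff (by positivity)).mp hlog
  have hφ : 0 < φ d := Nat.totient_pos.mpr (Nat.pos_of_mem_divisors hd)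
  exact_mod_cast (one_lt_div (by positivity)).mp hratio

theorem div_two_mul_pi_sq_le_three_halves : 27 / (2 * Real.pi ^ 2) ≤ 3 / 2 := by
  rw [div_le_iff₀ (by positivity)]
  nlinarith [Real.pi_gt_three]

theorem h_ge_of_KL_pos'_general (n : ℕ) (hKL : KL n > 0) :
    h n ≥ 27 / (2 * Real.pi ^ 2) := by
  obtain ⟨d, hd, hφ⟩ := exists_two_mul_totient_lt_of_KL_pos hKL
  calc 27 / (2 * Real.pi ^ 2) ≤ 3 / 2 := div_two_mul_pi_sq_le_three_halves
    _ ≤ h d := three_halves_le_h_of_two_mul_totient_lt hφ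
    _ ≤ h n := h_le_h_of_dvd (Nat.dvd_of_mem_divisors hd) (Nat.ne_zero_of_mem_divisors hd)

theorem h_ge_of_KL_pos' (n : ℕ) (hn : 0 < n) (hKL : KL n > 0) :
    h n ≥ 27 / (2 * Real.pi ^ 2) :=
  h_ge_of_KL_pos'_general n hKL
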